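/- Let d ≥ 1 be an integer and c a real number. If there exists a polynomial q with real coefficients such that for every integer n ≥ 0, ∑_{k=0}^{n−1} (k^d − c)/k! = −q(n)/n!, then c = b(d). -/

import Mathlib

/-!
Dobinski's formula `∑ k^d / k! = b(d) · e` follows from the Bell recursion by shifting the index of
the series and expanding `(k + 1)^d` binomially. On the other hand `q(n) / n! → 0` for every
polynomial `q`, so the hypothesis forces the series `∑ (k^d - c) / k!`, whose sum is
`(b(d) - c) · e`, to sum to `0`.
-/

def bell : ℕ → ℕ
  | 0 => 1
  | d + 1 => ∑ j ∈ (Finset.range (d + 1)).attach, Nat.choose d j.1 * bell j.1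
  decreasing_by exact Finset.mem_range.mp j.2

open Finset Filter Topology Polynomial
open scoped Nat

lemma bell_succ (d : ℕ) : bell (d + 1) = ∑ j ∈ range (d + 1), d.choose j * bell j := by
  rw [bell]
  exact sum_attach (range (d + 1)) fun j => d.choose j * bell j

lemma hasSum_natCast_pow_div_factorial (d : ℕ) :
    HasSum (fun k : ℕ => (k : ℝ) ^ d / k !) (bell d * Real.exp 1) := by
  induction d using Nat.strong_induction_on with
  | _ d ih =>
    cases d with
    | zero =>
      simpa [bell, Real.exp_eq_exp_ℝ] using NormedSpace.expSeries_div_hasSum_exp (1 : ℝ)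
    | succ d =>
      have hshift : ∀ k : ℕ, ((k : ℝ) + 1) ^ (d + 1) / (k + 1)! =
          ∑ j ∈ range (d + 1), (d.choose j : ℝ) * ((k : ℝ) ^ j / k !) := by
        intro k
        calc ((k : ℝ) + 1) ^ (d + 1) / (k + 1)! = ((k : ℝ) + 1) ^ d / k ! := by
              rw [Nat.factorial_succ, pow_succ]
              push_cast
              field_simp
          _ = _ := by
              rw [add_pow, sum_div]
              refine sum_congr rfl fun j _ => ?_
              rw [one_pow]
              ring
      have hsum : HasSum (fun k : ℕ => ∑ j ∈ range (d + 1), (d.choose j : ℝ) * ((k : ℝ) ^ j / k !))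
          (bell (d + 1) * Real.exp 1) := by
        rw [bell_succ]
        push_cast
        rw [sum_mul]
        refine hasSum_sum fun j hj => ?_
        rw [mul_assoc]
        exact (ih j (mem_range.mp hj)).mul_left _
      rw [← hasSum_nat_add_iff' 1]
      simpa [hshift] using hsum

lemma tendsto_eval_div_factorial (q : ℝ[X]) :
    Tendsto (fun n : ℕ => q.eval (n : ℝ) / n !) atTop (𝓝 0) := by
  have hmonomial (i : ℕ) : Tendsto (fun n : ℕ => (n : ℝ) ^ i / n !) atTop (𝓝 0) :=
    (hasSum_natCast_pow_div_factorial i).summable.tendsto_atTop_zero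
  simpa [eval_eq_sum_range, sum_div, mul_div_assoc] using
    tendsto_finsetSum (range (q.natDegree + 1)) fun i _ => (hmonomial i).const_mul (q.coeff i)

theorem stmt_1_general (d : ℕ) (c : ℝ)
    (h : ∃ q : Polynomial ℝ, ∀ n : ℕ,
      ∑ k ∈ Finset.range n, (((k : ℝ) ^ d - c) / (Nat.factorial k : ℝ)) =
        -(q.eval (n : ℝ) / (Nat.factorial n : ℝ))) :
    c = bell d := by
  obtain ⟨q, hq⟩ := h
  have hsum : HasSum (fun k : ℕ => ((k : ℝ) ^ d - c) / k !) ((bell d - c) * Real.exp 1) := by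
    have hconst := (hasSum_natCast_pow_div_factorial 0).mul_left c
    simp only [pow_zero, bell, Nat.cast_one, one_mul] at hconst
    simpa only [sub_div, sub_mul, mul_one_div] using (hasSum_natCast_pow_div_factorial d).sub hconst
  have hzero : Tendsto (fun n : ℕ => ∑ k ∈ range n, ((k : ℝ) ^ d - c) / k !) atTop (𝓝 0) := by
    simpa only [hq, neg_zero] using (tendsto_eval_div_factorial q).neg
  have hprod : ((bell d : ℝ) - c) * Real.exp 1 = 0 :=
    tendsto_nhds_unique hsum.tendsto_sum_nat hzero
  linarith [(mul_eq_zero.mp hprod).resolve_right (Real.exp_pos 1).ne']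

theorem stmt_1 (d : ℕ) (hd : 1 ≤ d) (c : ℝ)
    (h : ∃ q : Polynomial ℝ, ∀ n : ℕ,
      ∑ k ∈ Finset.range n, (((k : ℝ) ^ d - c) / (Nat.factorial k : ℝ)) =
        -(q.eval (n : ℝ) / (Nat.factorial n : ℝ))) :
    c = bell d :=
  stmt_1_general d c h
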